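/- Let d ∈ ℕ with d ≥ 2, let L ≥ 1, let X ⊆ ℤ^d, and let f : X → ℝ^d be an L-bilipschitz mapping. Suppose there exists λ ≥ 1 such that every point of ℝ^d lies within Euclidean distance λ of some point of X. Then there exists an injective extension F : ℤ^d → ℝ^d of f such that F is 4λL-Lipschitz and its inverse (defined on F(ℤ^d)) is 96λ²L√d-Lipschitz. -/

import Mathlib

/-!
Retract each point `z` to a point `p z` of the net `X` within distance `λ` (fixing `X`) and put
`F z = f (p z) + ε • (z - p z)` with `ε = 1 / C`. Points with the same retraction are separated by
the linear term, which gives the constant `C` exactly. Points with different retractions have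
`dist (p x) (p y) ≥ 1`, so the perturbation, of size at most `2ελ`, is absorbed by the bilipschitz
bound of `f`; this gives the constant `6λL`, so any `C ≥ 6λL` works.
-/

noncomputable section

/-- `f` is `L`-bilipschitz on the set `s`. -/
def IsBilipOn {α β : Type*} [PseudoMetricSpace α] [PseudoMetricSpace β]
    (L : ℝ) (f : α → β) (s : Set α) : Prop :=
  ∀ x ∈ s, ∀ y ∈ s,
    (1 / L) * dist x y ≤ dist (f x) (f y) ∧ dist (f x) (f y) ≤ L * dist x y

/-- The integer lattice `ℤ^d ⊆ ℝ^d`. -/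
def intLat (d : ℕ) : Set (EuclideanSpace ℝ (Fin d)) := {x | ∀ i, ∃ n : ℤ, x i = n}

theorem intLat_pairwise_one_le_dist (d : ℕ) :
    (intLat d).Pairwise fun x y => 1 ≤ dist x y := by
  intro x hx y hy hxy
  obtain ⟨i, hi⟩ : ∃ i, x i ≠ y i := by
    by_contra! h
    exact hxy (PiLp.ext h)
  obtain ⟨m, hm⟩ := hx i
  obtain ⟨n, hn⟩ := hy i
  have hmn : m ≠ n := by rintro rfl; exact hi (hm.trans hn.symm)
  calc (1 : ℝ) ≤ dist m n := Int.pairwise_one_le_dist hmn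
    _ = dist (x i) (y i) := by rw [hm, hn, Int.dist_cast_real]
    _ ≤ dist x y := PiLp.dist_apply_le x y i

theorem exists_retraction_dist_le {α : Type*} [PseudoMetricSpace α] {X : Set α} {lam : ℝ}
    (hlam : 0 ≤ lam) (hnet : ∀ x, ∃ p ∈ X, dist x p ≤ lam) :
    ∃ p : α → α, (∀ z, p z ∈ X) ∧ (∀ z, dist z (p z) ≤ lam) ∧ ∀ z ∈ X, p z = z := by
  have h : ∀ z, ∃ q ∈ X, dist z q ≤ lam ∧ (z ∈ X → q = z) := fun z => by
    by_cases hz : z ∈ X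
    · exact ⟨z, hz, by simpa using hlam, fun _ => rfl⟩
    · obtain ⟨q, hq, hzq⟩ := hnet z
      exact ⟨q, hq, hzq, fun h => absurd h hz⟩
  choose p hpX hp hpid using h
  exact ⟨p, hpX, hp, hpid⟩

section PerturbedExtension

variable {E : Type*} [NormedAddCommGroup E] [NormedSpace ℝ E]

def perturbedExtension (f p : E → E) (ε : ℝ) (z : E) : E :=
  f (p z) + ε • (z - p z)

variable {f p : E → E} {ε : ℝ}

theorem perturbedExtension_of_fixed {z : E} (hz : p z = z) :
    perturbedExtension f p ε z = f z := by
  simp [perturbedExtension, hz]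

theorem dist_perturbedExtension_self (hε : 0 ≤ ε) (z : E) :
    dist (perturbedExtension f p ε z) (f (p z)) = ε * dist z (p z) := by
  rw [perturbedExtension, dist_self_add_left, norm_smul, Real.norm_of_nonneg hε,
    dist_eq_norm]

theorem dist_perturbedExtension_of_eq (hε : 0 ≤ ε) {x y : E} (hxy : p x = p y) :
    dist (perturbedExtension f p ε x) (perturbedExtension f p ε y) = ε * dist x y := by
  rw [perturbedExtension, perturbedExtension, hxy, dist_add_left, dist_smul₀,
    Real.norm_of_nonneg hε, dist_sub_right]

theorem dist_perturbedExtension_le (hε : 0 ≤ ε) (x y : E) :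
    dist (perturbedExtension f p ε x) (perturbedExtension f p ε y) ≤
      dist (f (p x)) (f (p y)) + ε * (dist x (p x) + dist y (p y)) := by
  have := dist_triangle4 (perturbedExtension f p ε x) (f (p x)) (f (p y))
    (perturbedExtension f p ε y)
  rw [dist_perturbedExtension_self hε, dist_comm (f (p y)),
    dist_perturbedExtension_self hε] at this
  linarith

theorem dist_le_dist_perturbedExtension (hε : 0 ≤ ε) (x y : E) :
    dist (f (p x)) (f (p y)) ≤
      dist (perturbedExtension f p ε x) (perturbedExtension f p ε y) +
        ε * (dist x (p x) + dist y (p y)) := by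
  have := dist_triangle4 (f (p x)) (perturbedExtension f p ε x)
    (perturbedExtension f p ε y) (f (p y))
  rw [dist_comm (f (p x)) (perturbedExtension f p ε x), dist_perturbedExtension_self hε,
    dist_perturbedExtension_self hε] at this
  linarith

variable {X : Set E} {L lam : ℝ}

theorem dist_perturbedExtension_le_of_one_le_dist
    (hf : ∀ x ∈ X, ∀ y ∈ X, dist (f x) (f y) ≤ L * dist x y)
    (hpX : ∀ z, p z ∈ X) (hp : ∀ z, dist z (p z) ≤ lam)
    (hL : 1 ≤ L) (hlam : 1 ≤ lam) (hε : 0 ≤ ε) (hε2 : ε ≤ 1 / 2)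
    {x y : E} (hxy : 1 ≤ dist x y) :
    dist (perturbedExtension f p ε x) (perturbedExtension f p ε y) ≤
      4 * lam * L * dist x y := by
  have hpp : dist (p x) (p y) ≤ dist x y + 2 * lam := by
    have := dist_triangle4 (p x) x y (p y)
    rw [dist_comm (p x) x] at this
    linarith [hp x, hp y]
  have hpert : ε * (dist x (p x) + dist y (p y)) ≤ lam := by
    nlinarith [hp x, hp y, dist_nonneg (x := x) (y := p x), dist_nonneg (x := y) (y := p y)]
  calc dist (perturbedExtension f p ε x) (perturbedExtension f p ε y)
      ≤ L * dist (p x) (p y) + lam :=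
        (dist_perturbedExtension_le hε x y).trans
          (add_le_add (hf _ (hpX x) _ (hpX y)) hpert)
    _ ≤ L * (dist x y + 2 * lam) + lam := by gcongr
    _ ≤ 4 * lam * L * dist x y := by
        have hd := dist_nonneg (x := x) (y := y)
        have h1 : L * dist x y ≤ lam * L * dist x y := by
          nlinarith [mul_nonneg (by linarith : (0 : ℝ) ≤ L) hd]
        have h2 : 2 * L * lam ≤ 2 * L * lam * dist x y := by
          nlinarith [mul_nonneg (by linarith : (0 : ℝ) ≤ L) (by linarith : (0 : ℝ) ≤ lam)]
        have h3 : lam ≤ lam * L * dist x y := by nlinarith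
        linarith

theorem dist_le_mul_dist_perturbedExtension_of_ne (hX : X.Pairwise fun x y => 1 ≤ dist x y)
    (hf : ∀ x ∈ X, ∀ y ∈ X, (1 / L) * dist x y ≤ dist (f x) (f y))
    (hpX : ∀ z, p z ∈ X) (hp : ∀ z, dist z (p z) ≤ lam)
    (hL : 0 < L) (hlam : 1 ≤ lam) (hε : 0 ≤ ε) (hεL : ε * (4 * lam * L) ≤ 1)
    {x y : E} (hpxy : p x ≠ p y) :
    dist x y ≤ 6 * lam * L * dist (perturbedExtension f p ε x) (perturbedExtension f p ε y) := by
  set t := dist (perturbedExtension f p ε x) (perturbedExtension f p ε y)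
  set D := dist (p x) (p y)
  have hD : 1 ≤ D := hX (hpX x) (hpX y) hpxy
  have hDt : D ≤ L * t + L * (ε * (dist x (p x) + dist y (p y))) := by
    have := (hf _ (hpX x) _ (hpX y)).trans (dist_le_dist_perturbedExtension hε x y)
    rw [one_div, inv_mul_le_iff₀ hL, mul_add] at this
    exact this
  have hpert : L * (ε * (dist x (p x) + dist y (p y))) ≤ 1 / 2 := by
    nlinarith [hp x, hp y, dist_nonneg (x := x) (y := p x), dist_nonneg (x := y) (y := p y)]
  have hxy : dist x y ≤ dist x (p x) + D + dist y (p y) := by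
    have := dist_triangle4 x (p x) (p y) y
    rwa [dist_comm (p y)] at this
  nlinarith [hp x, hp y, mul_le_mul_of_nonneg_left hD (by linarith : (0 : ℝ) ≤ 3 * lam)]

theorem exists_extension_of_net {S : Set E} (hS : S.Pairwise fun x y => 1 ≤ dist x y)
    (hXS : X ⊆ S) (hf : IsBilipOn L f X) (hL : 1 ≤ L) (hlam : 1 ≤ lam) {C : ℝ}
    (hC : 6 * lam * L ≤ C) (hnet : ∀ x, ∃ p ∈ X, dist x p ≤ lam) :
    ∃ F : E → E, Set.EqOn F f X ∧
      (∀ x ∈ S, ∀ y ∈ S, dist (F x) (F y) ≤ 4 * lam * L * dist x y) ∧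
      ∀ x y, dist x y ≤ C * dist (F x) (F y) := by
  obtain ⟨p, hpX, hp, hpid⟩ := exists_retraction_dist_le (by linarith) hnet
  have hC0 : 0 < C := by nlinarith
  have hε : 0 ≤ C⁻¹ := inv_nonneg.2 hC0.le
  refine ⟨perturbedExtension f p C⁻¹, fun z hz => perturbedExtension_of_fixed (hpid z hz),
    fun x hx y hy => ?_, fun x y => ?_⟩
  · rcases eq_or_ne x y with rfl | hxy
    · simp
    refine dist_perturbedExtension_le_of_one_le_dist (fun x hx y hy => (hf x hx y hy).2)
      hpX hp hL hlam hε ?_ (hS hx hy hxy)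
    rw [one_div]
    exact inv_anti₀ two_pos (by nlinarith)
  · rcases eq_or_ne (p x) (p y) with hpxy | hpxy
    · rw [dist_perturbedExtension_of_eq hε hpxy, ← mul_assoc, mul_inv_cancel₀ hC0.ne', one_mul]
    calc dist x y
        ≤ 6 * lam * L * dist (perturbedExtension f p C⁻¹ x) (perturbedExtension f p C⁻¹ y) :=
          dist_le_mul_dist_perturbedExtension_of_ne (hS.mono hXS)
            (fun x hx y hy => (hf x hx y hy).1) hpX hp (by linarith) hlam hε
            (by rw [inv_mul_le_iff₀ hC0]; linarith) hpxy
      _ ≤ C * dist (perturbedExtension f p C⁻¹ x) (perturbedExtension f p C⁻¹ y) := by gcongr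

end PerturbedExtension

theorem stmt19 (d : ℕ) (hd : 2 ≤ d) (L lam : ℝ) (hL : 1 ≤ L) (hlam : 1 ≤ lam)
    (X : Set (EuclideanSpace ℝ (Fin d))) (hX : X ⊆ intLat d)
    (f : EuclideanSpace ℝ (Fin d) → EuclideanSpace ℝ (Fin d))
    (hf : IsBilipOn L f X)
    (hnet : ∀ x : EuclideanSpace ℝ (Fin d), ∃ p ∈ X, dist x p ≤ lam) :
    ∃ F : EuclideanSpace ℝ (Fin d) → EuclideanSpace ℝ (Fin d),
      Set.EqOn F f X ∧ Set.InjOn F (intLat d) ∧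
      (∀ x ∈ intLat d, ∀ y ∈ intLat d,
        dist (F x) (F y) ≤ 4 * lam * L * dist x y) ∧
      (∀ x ∈ intLat d, ∀ y ∈ intLat d,
        dist x y ≤ 96 * lam ^ 2 * L * Real.sqrt d * dist (F x) (F y)) := by
  have hsqrt : 1 ≤ Real.sqrt d := Real.one_le_sqrt.2 (by exact_mod_cast one_le_two.trans hd)
  have hC : 6 * lam * L ≤ 96 * lam ^ 2 * L * Real.sqrt d := by
    have : 1 ≤ lam * Real.sqrt d := one_le_mul_of_one_le_of_one_le hlam hsqrt
    nlinarith [mul_pos (one_pos.trans_le hlam) (one_pos.trans_le hL)]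
  obtain ⟨F, hFf, hup, hlow⟩ :=
    exists_extension_of_net (intLat_pairwise_one_le_dist d) hX hf hL hlam hC hnet
  refine ⟨F, hFf, fun x _ y _ hxy => ?_, hup, fun x _ y _ => hlow x y⟩
  simpa [hxy] using hlow x y

end
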